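/- Let f_E(γ) and F_B(γ) be as in the discrete model: F_B(γ) = 1 − e^{−γ/(Lγ̄_B)} and f_E the density of γ̄_E X/Y. Then the lower bound of SOP equals 1 − (2/(δ(R₂²−R₁²))) ∫_{R₁^δ}^{R₂^δ} y^{2/δ−1} · (γ̄_B y)/(γ̄_B y + R_s γ̄_E) dy, and this quantity is strictly increasing in R_s for R_s > 0 (strictly, since the integrand is strictly decreasing in R_s pointwise on a set of positive measure). -/

import Mathlib

open MeasureTheory ProbabilityTheory Real Set Filter

/-- Exponential distribution with mean `m` (density `m⁻¹ e^{-x/m}` on `x ≥ 0`). -/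
noncomputable def expMean (m : ℝ) : Measure ℝ :=
  volume.withDensity fun x => ENNReal.ofReal (if 0 ≤ x then m⁻¹ * Real.exp (-x / m) else 0)

/-- Path-loss distribution: density `(2/δ) y^{2/δ-1}/(R₂²-R₁²)` on `[R₁^δ, R₂^δ]`. -/
noncomputable def pathLossMeasure (δ R₁ R₂ : ℝ) : Measure ℝ :=
  volume.withDensity fun y => ENNReal.ofReal
    (if y ∈ Set.Icc (R₁ ^ δ) (R₂ ^ δ) then 2 / δ * y ^ (2 / δ - 1) / (R₂ ^ 2 - R₁ ^ 2) else 0)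

/-- Lower incomplete gamma function `γinc(a,x) = ∫₀ˣ t^{a-1} e^{-t} dt`. -/
noncomputable def lowerGamma (a x : ℝ) : ℝ := ∫ t in (0:ℝ)..x, t ^ (a - 1) * Real.exp (-t)

/-! Conditionally on `(X, Y) = (x, y)`, the event `γ_B > R_s γ̄_E x / y` has probability
`exp (-R_s γ̄_E x / (L γ̄_B y))`, so averaging over `X` gives the Laplace transform of an
exponential law, `γ̄_B y / (γ̄_B y + R_s γ̄_E)`, in which `L` cancels. Averaging over the path-loss
law of `Y` and passing to the complementary event gives the closed form. Strict monotonicity holds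
because the integrand is positive and strictly decreasing in `R_s` at every `y > 0`. -/

open scoped ENNReal

lemma lintegral_ofReal_exp_mul_Ioi {a : ℝ} (ha : a < 0) (c : ℝ) :
    ∫⁻ x in Ioi c, ENNReal.ofReal (exp (a * x)) = ENNReal.ofReal (-exp (a * c) / a) := by
  rw [← integral_exp_mul_Ioi ha, ofReal_integral_eq_lintegral_ofReal
    (integrableOn_exp_mul_Ioi ha c) (ae_of_all _ fun x => (exp_pos _).le)]

lemma lintegral_expMean (m : ℝ) (f : ℝ → ℝ≥0∞) :
    ∫⁻ x, f x ∂expMean m = ∫⁻ x in Ici 0, ENNReal.ofReal (m⁻¹ * exp (-x / m)) * f x := by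
  rw [expMean, lintegral_withDensity_eq_lintegral_mul_non_measurable,
    ← lintegral_indicator measurableSet_Ici]
  · congr 1 with x
    by_cases hx : 0 ≤ x <;> simp [hx]
  · exact (Measurable.ite measurableSet_Ici (by fun_prop) measurable_const).ennreal_ofReal
  · exact ae_of_all _ fun _ => ENNReal.ofReal_lt_top

lemma expMean_Ioi {m t : ℝ} (hm : 0 < m) (ht : 0 ≤ t) :
    expMean m (Ioi t) = ENNReal.ofReal (exp (-t / m)) := by
  rw [expMean, withDensity_apply _ measurableSet_Ioi]
  calc ∫⁻ x in Ioi t, ENNReal.ofReal (if 0 ≤ x then m⁻¹ * exp (-x / m) else 0)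
      = ∫⁻ x in Ioi t, ENNReal.ofReal m⁻¹ * ENNReal.ofReal (exp (-m⁻¹ * x)) := by
        refine setLIntegral_congr_fun measurableSet_Ioi fun x (hx : t < x) => ?_
        rw [if_pos (ht.trans hx.le), ← ENNReal.ofReal_mul (by positivity)]
        congr 3
        field_simp
    _ = ENNReal.ofReal (exp (-t / m)) := by
        rw [lintegral_const_mul _ (by fun_prop), lintegral_ofReal_exp_mul_Ioi (by simpa),
          ← ENNReal.ofReal_mul (by positivity)]
        congr 1
        field_simp

lemma lintegral_expMean_Ioi_mul {m n s : ℝ} (hm : 0 < m) (hn : 0 < n) (hs : 0 ≤ s) :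
    ∫⁻ x, expMean n (Ioi (s * x)) ∂expMean m = ENNReal.ofReal (n / (n + s * m)) := by
  have ha : -(m⁻¹ + s / n) < 0 := by
    have : 0 ≤ s / n := by positivity
    have : 0 < m⁻¹ := by positivity
    linarith
  rw [lintegral_expMean, ← setLIntegral_congr Ioi_ae_eq_Ici]
  calc ∫⁻ x in Ioi 0, ENNReal.ofReal (m⁻¹ * exp (-x / m)) * expMean n (Ioi (s * x))
      = ∫⁻ x in Ioi 0, ENNReal.ofReal m⁻¹ * ENNReal.ofReal (exp (-(m⁻¹ + s / n) * x)) := by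
        refine setLIntegral_congr_fun measurableSet_Ioi fun x (hx : 0 < x) => ?_
        rw [expMean_Ioi hn (by positivity), ← ENNReal.ofReal_mul (by positivity),
          ← ENNReal.ofReal_mul (by positivity), mul_assoc, ← exp_add]
        congr 3
        field_simp
        ring
    _ = ENNReal.ofReal (n / (n + s * m)) := by
        rw [lintegral_const_mul _ (by fun_prop), lintegral_ofReal_exp_mul_Ioi ha,
          ← ENNReal.ofReal_mul (by positivity), mul_zero, exp_zero]
        congr 1
        field_simp

lemma lintegral_pathLossMeasure (δ R₁ R₂ : ℝ) (f : ℝ → ℝ≥0∞) :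
    ∫⁻ y, f y ∂pathLossMeasure δ R₁ R₂ = ∫⁻ y in Icc (R₁ ^ δ) (R₂ ^ δ),
      ENNReal.ofReal (2 / δ * y ^ (2 / δ - 1) / (R₂ ^ 2 - R₁ ^ 2)) * f y := by
  rw [pathLossMeasure, lintegral_withDensity_eq_lintegral_mul_non_measurable,
    ← lintegral_indicator measurableSet_Icc]
  · congr 1 with y
    simp only [Pi.mul_apply, indicator_apply]
    split_ifs <;> simp
  · exact (Measurable.ite measurableSet_Icc (by fun_prop) measurable_const).ennreal_ofReal
  · exact ae_of_all _ fun _ => ENNReal.ofReal_lt_top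

lemma lintegral_pathLossMeasure_eq_ofReal {δ R₁ R₂ : ℝ} (hδ : 0 < δ) (hR₁ : 0 < R₁)
    (hR : R₁ ≤ R₂) {f : ℝ → ℝ≥0∞} {g : ℝ → ℝ} (hg : ContinuousOn g (Icc (R₁ ^ δ) (R₂ ^ δ)))
    (hg0 : ∀ y ∈ Icc (R₁ ^ δ) (R₂ ^ δ), 0 ≤ g y)
    (hfg : ∀ y ∈ Icc (R₁ ^ δ) (R₂ ^ δ), f y = ENNReal.ofReal (g y)) :
    ∫⁻ y, f y ∂pathLossMeasure δ R₁ R₂ =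
      ENNReal.ofReal (2 / (δ * (R₂ ^ 2 - R₁ ^ 2)) *
        ∫ y in R₁ ^ δ..R₂ ^ δ, y ^ (2 / δ - 1) * g y) := by
  have hpos : ∀ y ∈ Icc (R₁ ^ δ) (R₂ ^ δ), 0 < y :=
    fun y hy => (rpow_pos_of_pos hR₁ δ).trans_le hy.1
  have hsq : 0 ≤ R₂ ^ 2 - R₁ ^ 2 := by nlinarith
  have hdens : ∀ y ∈ Icc (R₁ ^ δ) (R₂ ^ δ), 0 ≤ 2 / δ * y ^ (2 / δ - 1) / (R₂ ^ 2 - R₁ ^ 2) :=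
    fun y hy => by have := hpos y hy; positivity
  have hcont : ContinuousOn (fun y => 2 / δ * y ^ (2 / δ - 1) / (R₂ ^ 2 - R₁ ^ 2) * g y)
      (Icc (R₁ ^ δ) (R₂ ^ δ)) :=
    (((continuousOn_id.rpow_const fun y hy => Or.inl (hpos y hy).ne').const_smul
      (2 / δ)).div_const _).mul hg
  rw [lintegral_pathLossMeasure, setLIntegral_congr_fun measurableSet_Icc fun y hy => by
      rw [hfg y hy, ← ENNReal.ofReal_mul (hdens y hy)],
    ← ofReal_integral_eq_lintegral_ofReal (hcont.integrableOn_compact isCompact_Icc)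
      (ae_restrict_of_forall_mem measurableSet_Icc fun y hy =>
        mul_nonneg (hdens y hy) (hg0 y hy)),
    integral_Icc_eq_integral_Ioc, ← intervalIntegral.integral_of_le
      (rpow_le_rpow hR₁.le hR hδ.le), ← intervalIntegral.integral_const_mul]
  congr 2 with y
  field_simp

lemma measure_lt_eq_lintegral_map {Ω α : Type*} [MeasurableSpace Ω] [MeasurableSpace α]
    {μ : Measure Ω} [IsFiniteMeasure μ] {Z : Ω → α} {B : Ω → ℝ} (hZ : Measurable Z)
    (hB : Measurable B) (hind : IndepFun Z B μ) {φ : α → ℝ} (hφ : Measurable φ) :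
    μ {ω | φ (Z ω) < B ω} = ∫⁻ z, μ.map B (Ioi (φ z)) ∂μ.map Z := by
  have hS : MeasurableSet {p : α × ℝ | φ p.1 < p.2} :=
    measurableSet_lt (hφ.comp measurable_fst) measurable_snd
  calc μ {ω | φ (Z ω) < B ω} = μ.map (fun ω => (Z ω, B ω)) {p | φ p.1 < p.2} :=
        (Measure.map_apply (hZ.prodMk hB) hS).symm
    _ = ((μ.map Z).prod (μ.map B)) {p | φ p.1 < p.2} := by
        rw [hind.map_prod_eq_prod_map_map hZ.aemeasurable hB.aemeasurable]
    _ = ∫⁻ z, μ.map B (Ioi (φ z)) ∂μ.map Z := Measure.prod_apply hS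

lemma strictAntiOn_integral_rpow_mul_div_add {p c e a b : ℝ} (ha : 0 < a) (hab : a < b)
    (hc : 0 < c) (he : 0 < e) :
    StrictAntiOn (fun s => ∫ y in a..b, y ^ p * (c * y) / (c * y + s * e)) (Ici 0) := by
  have hcont : ∀ s ∈ Ici (0 : ℝ),
      ContinuousOn (fun y => y ^ p * (c * y) / (c * y + s * e)) (Icc a b) := by
    intro s (hs : 0 ≤ s)
    refine ((continuousOn_id.rpow_const fun y hy => Or.inl ?_).mul (by fun_prop)).div
      (by fun_prop) fun y hy => ?_
    · exact (ha.trans_le hy.1).ne'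
    · have := ha.trans_le hy.1; positivity
  intro s hs t ht hst
  have hlt : ∀ y, 0 < y →
      y ^ p * (c * y) / (c * y + t * e) < y ^ p * (c * y) / (c * y + s * e) :=
    fun y hy => div_lt_div_of_pos_left (by positivity) (by have : 0 ≤ s := hs; positivity)
      (by gcongr)
  exact intervalIntegral.integral_lt_integral_of_continuousOn_of_le_of_exists_lt hab
    (hcont t ht) (hcont s hs) (fun y hy => (hlt y (ha.trans hy.1)).le)
    ⟨a, left_mem_Icc.2 hab.le, hlt a ha⟩

lemma measure_mul_ratio_lt_eq {Ω : Type*} [MeasureSpace Ω]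
    [IsProbabilityMeasure (ℙ : Measure Ω)]
    {L gB gE δ R₁ R₂ Rs : ℝ} (hL : 0 < L) (hgB : 0 < gB) (hgE : 0 < gE) (hδ : 0 < δ)
    (hR₁ : 0 < R₁) (hR : R₁ ≤ R₂) (hRs : 0 ≤ Rs)
    {γB X Y : Ω → ℝ} (hmB : Measurable γB) (hmX : Measurable X) (hmY : Measurable Y)
    (hBlaw : Measure.map γB ℙ = expMean (L * gB))
    (hXlaw : Measure.map X ℙ = expMean L)
    (hYlaw : Measure.map Y ℙ = pathLossMeasure δ R₁ R₂)
    (hXY : IndepFun X Y ℙ)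
    (hBE : IndepFun γB (fun ω => (X ω, Y ω)) ℙ) :
    ℙ {ω | Rs * (gE * X ω / Y ω) < γB ω} = ENNReal.ofReal (2 / (δ * (R₂ ^ 2 - R₁ ^ 2)) *
      ∫ y in R₁ ^ δ..R₂ ^ δ, y ^ (2 / δ - 1) * (gB * y) / (gB * y + Rs * gE)) := by
  have hφ : Measurable fun p : ℝ × ℝ => Rs * (gE * p.1 / p.2) := by fun_prop
  have hanti : Antitone fun t => Measure.map γB ℙ (Ioi t) :=
    fun _ _ hst => measure_mono (Ioi_subset_Ioi hst)
  have hF : Measurable fun p : ℝ × ℝ => Measure.map γB ℙ (Ioi (Rs * (gE * p.1 / p.2))) :=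
    hanti.measurable.comp hφ
  rw [measure_lt_eq_lintegral_map (hmX.prodMk hmY) hmB hBE.symm hφ,
    hXY.map_prod_eq_prod_map_map hmX.aemeasurable hmY.aemeasurable, lintegral_prod_symm' _ hF,
    hXlaw, hYlaw, hBlaw]
  have hpos : ∀ y ∈ Icc (R₁ ^ δ) (R₂ ^ δ), 0 < y :=
    fun y hy => (rpow_pos_of_pos hR₁ δ).trans_le hy.1
  convert lintegral_pathLossMeasure_eq_ofReal hδ hR₁ hR
    (g := fun y => gB * y / (gB * y + Rs * gE))
    (ContinuousOn.div (by fun_prop) (by fun_prop) fun y hy => by have := hpos y hy; positivity)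
    (fun y hy => by have := hpos y hy; positivity) (fun y hy => ?_) using 3
  · simp only [mul_div_assoc]
  have hy := hpos y hy
  simp_rw [fun x => show Rs * (gE * x / y) = Rs * gE / y * x by ring]
  rw [lintegral_expMean_Ioi_mul hL (by positivity) (by positivity)]
  congr 1
  field_simp

/-- closed form of the lower-bound SOP in the discrete model and its
strict monotonicity in the threshold R_s. -/
theorem statement_17 {Ω : Type*} [MeasureSpace Ω] [IsProbabilityMeasure (ℙ : Measure Ω)]
    (L gB gE δ R₁ R₂ : ℝ) (hL : 0 < L) (hgB : 0 < gB) (hgE : 0 < gE) (hδ : 0 < δ)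
    (hR₁ : 0 < R₁) (hR : R₁ < R₂)
    (γB X Y : Ω → ℝ) (hmB : Measurable γB) (hmX : Measurable X) (hmY : Measurable Y)
    (hBlaw : Measure.map γB ℙ = expMean (L * gB))
    (hXlaw : Measure.map X ℙ = expMean L)
    (hYlaw : Measure.map Y ℙ = pathLossMeasure δ R₁ R₂)
    (hXY : IndepFun X Y ℙ)
    (hBE : IndepFun γB (fun ω => (X ω, Y ω)) ℙ) :
    let Pl : ℝ → ℝ := fun Rs => 1 - 2 / (δ * (R₂ ^ 2 - R₁ ^ 2)) *
      ∫ y in R₁ ^ δ..R₂ ^ δ, y ^ (2 / δ - 1) * (gB * y) / (gB * y + Rs * gE)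
    (∀ Rs : ℝ, 0 < Rs →
        ℙ {ω | γB ω ≤ Rs * (gE * X ω / Y ω)} = ENNReal.ofReal (Pl Rs)) ∧
      StrictMonoOn Pl (Set.Ioi 0) := by
  intro Pl
  have ha : 0 < R₁ ^ δ := rpow_pos_of_pos hR₁ δ
  have hab : R₁ ^ δ < R₂ ^ δ := rpow_lt_rpow hR₁.le hR hδ
  have hC : 0 < 2 / (δ * (R₂ ^ 2 - R₁ ^ 2)) := by
    have : 0 < R₂ ^ 2 - R₁ ^ 2 := by nlinarith
    positivity
  refine ⟨fun Rs hRs => ?_, fun s hs t ht hst => ?_⟩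
  · have hI : 0 ≤ ∫ y in R₁ ^ δ..R₂ ^ δ, y ^ (2 / δ - 1) * (gB * y) / (gB * y + Rs * gE) :=
      intervalIntegral.integral_nonneg hab.le fun y hy => by
        have := ha.trans_le hy.1; positivity
    have hcompl :
        {ω | γB ω ≤ Rs * (gE * X ω / Y ω)} = {ω | Rs * (gE * X ω / Y ω) < γB ω}ᶜ := by
      ext; simp
    rw [hcompl, prob_compl_eq_one_sub (measurableSet_lt (by fun_prop) hmB),
      measure_mul_ratio_lt_eq hL hgB hgE hδ hR₁ hR.le hRs.le hmB hmX hmY hBlaw hXlaw hYlaw hXY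
        hBE,
      ENNReal.ofReal_sub _ (by positivity), ENNReal.ofReal_one]
  · have hlt := (strictAntiOn_integral_rpow_mul_div_add (p := 2 / δ - 1) ha hab hgB hgE).mono
      Ioi_subset_Ici_self hs ht hst
    exact sub_lt_sub_left (mul_lt_mul_of_pos_left hlt hC) 1
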